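/- Let G be a connected interval graph on n vertices with interval representation I = ([a_1,b_1],...,[a_n,b_n]), and let B ⊆ {b_1,...,b_n} be a set of endpoints such that at most k intervals of I are disjoint from B, where k < n. Then there exists a set X of at most k edges of G such that α(G/X) ≤ |B|, where G/X denotes the graph obtained by contracting all edges in X. -/

import Mathlib

/-!
Let `T` be the set of intervals meeting `B`; at most `k` intervals lie outside `T`. In a connected
graph one edge per vertex outside `T` suffices to join every vertex to `T`: repeatedly add an edge
leaving the current set. Contracting these edges, every class of `G/X` contains an interval
through a point of `B`. Two classes whose chosen intervals share a point of `B` are adjacent, so an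
independent set of `G/X` picks distinct points of `B`.
-/

def intervalGraph {n : ℕ} (J : Fin n → ℝ × ℝ) : SimpleGraph (Fin n) where
  Adj u v := u ≠ v ∧ (Set.Icc (J u).1 (J u).2 ∩ Set.Icc (J v).1 (J v).2).Nonempty
  symm := ⟨by
    rintro u v ⟨h, x, hx⟩
    exact ⟨h.symm, x, hx.2, hx.1⟩⟩
  loopless := ⟨by rintro v ⟨h, _⟩; exact h rfl⟩

/-- The spanning subgraph of `G` with edge set `X`. -/
def edgeSub {V : Type*} (G : SimpleGraph V) (X : Set (Sym2 V)) : SimpleGraph V where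
  Adj u v := G.Adj u v ∧ s(u, v) ∈ X
  symm := ⟨by rintro u v ⟨h, he⟩; exact ⟨h.symm, by rwa [Sym2.eq_swap]⟩⟩
  loopless := ⟨by rintro v ⟨h, _⟩; exact G.irrefl h⟩

/-- The graph `G/X` obtained from `G` by contracting the edges in `X`:
vertices are classes of the reachability relation of the subgraph with edge
set `X`; distinct classes are adjacent if they contain adjacent vertices. -/
def contract {V : Type*} (G : SimpleGraph V) (X : Set (Sym2 V)) :
    SimpleGraph (Quotient (edgeSub G X).reachableSetoid) where
  Adj c d := c ≠ d ∧ ∃ u v : V,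
    Quotient.mk _ u = c ∧ Quotient.mk _ v = d ∧ G.Adj u v
  symm := ⟨by rintro c d ⟨hne, u, v, hu, hv, h⟩; exact ⟨hne.symm, v, u, hv, hu, h.symm⟩⟩
  loopless := ⟨by rintro c ⟨hne, _⟩; exact hne rfl⟩

def IsIndepSet {W : Type*} (G : SimpleGraph W) (s : Set W) : Prop :=
  s.Pairwise fun u v => ¬ G.Adj u v

namespace SimpleGraph

variable {V : Type*} {G : SimpleGraph V}

lemma edgeSub_mono {X Y : Set (Sym2 V)} (h : X ⊆ Y) : edgeSub G X ≤ edgeSub G Y :=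
  fun _ _ hadj => ⟨hadj.1, h hadj.2⟩

lemma Connected.exists_adj_mem_not_mem (hG : G.Connected) {S : Set V} (hS : S.Nonempty)
    (hSc : Sᶜ.Nonempty) : ∃ a b, G.Adj a b ∧ a ∈ S ∧ b ∉ S := by
  obtain ⟨u, hu⟩ := hS
  obtain ⟨v, hv⟩ := hSc
  obtain ⟨d, -, hd⟩ := (hG.preconnected u v).some.exists_boundary_dart S hu hv
  exact ⟨d.fst, d.snd, d.adj, hd⟩

lemma Connected.exists_edgeSub_reachable [Fintype V] [DecidableEq V] (hG : G.Connected)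
    (T : Finset V) (hT : T.Nonempty) :
    ∃ X : Finset (Sym2 V), ↑X ⊆ G.edgeSet ∧ X.card ≤ Tᶜ.card ∧
      ∀ v, ∃ w ∈ T, (edgeSub G ↑X).Reachable v w := by
  induction h : Tᶜ.card generalizing T with
  | zero =>
    refine ⟨∅, by simp, by simp, fun v => ⟨v, ?_, .rfl⟩⟩
    simp_all [Finset.compl_eq_empty_iff]
  | succ m ih =>
    have hTc : (↑T : Set V)ᶜ.Nonempty := by
      simpa [← Finset.coe_compl] using Finset.card_pos.mp (h ▸ m.succ_pos)
    obtain ⟨a, b, hab, ha, hb⟩ := hG.exists_adj_mem_not_mem (Finset.coe_nonempty.mpr hT) hTc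
    have hb : b ∉ T := hb
    obtain ⟨X, hXE, hXcard, hX⟩ := ih (insert b T) (Finset.insert_nonempty b T) (by
      rw [Finset.compl_insert, Finset.card_erase_of_mem (Finset.mem_compl.mpr hb), h]; rfl)
    have hle : edgeSub G ↑X ≤ edgeSub G ↑(insert s(a, b) X) :=
      edgeSub_mono (by simp [Set.subset_insert])
    refine ⟨insert s(a, b) X, ?_, ?_, fun v => ?_⟩
    · simpa [Set.insert_subset_iff] using ⟨hab, hXE⟩
    · exact (Finset.card_insert_le _ _).trans (by omega)
    · obtain ⟨w, hw, hvw⟩ := hX v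
      rcases Finset.mem_insert.mp hw with rfl | hw
      · have hba : (edgeSub G ↑(insert s(a, w) X)).Adj w a := ⟨hab.symm, by simp [Sym2.eq_swap]⟩
        exact ⟨a, ha, (hvw.mono hle).trans hba.reachable⟩
      · exact ⟨w, hw, hvw.mono hle⟩

end SimpleGraph

lemma IsIndepSet.card_le_of_isClique_fiber {W β : Type*} {H : SimpleGraph W} {s : Finset W}
    (hs : IsIndepSet H ↑s) {B : Finset β} (f : W → β) (hf : ∀ w, f w ∈ B)
    (hfiber : ∀ b, H.IsClique (f ⁻¹' {b})) : s.card ≤ B.card :=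
  Finset.card_le_card_of_injOn f (fun w _ => hf w) fun _ hv _ hw hvw => by
    by_contra hne
    exact hs hv hw hne (hfiber _ rfl hvw.symm hne)

/-- The points of `B` index a clique cover of `G/X`. -/
lemma contract_intervalGraph_indepSet_card_le {n : ℕ} {J : Fin n → ℝ × ℝ}
    {X : Set (Sym2 (Fin n))} {B : Finset ℝ}
    (hX : ∀ v, ∃ w, (∃ x ∈ B, x ∈ Set.Icc (J w).1 (J w).2) ∧
      (edgeSub (intervalGraph J) X).Reachable v w)
    {s : Finset (Quotient (edgeSub (intervalGraph J) X).reachableSetoid)}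
    (hs : IsIndepSet (contract (intervalGraph J) X) ↑s) : s.card ≤ B.card := by
  have hclass : ∀ c : Quotient (edgeSub (intervalGraph J) X).reachableSetoid,
      ∃ w, Quotient.mk _ w = c ∧ ∃ x ∈ B, x ∈ Set.Icc (J w).1 (J w).2 := by
    rintro ⟨v⟩
    obtain ⟨w, hwB, hvw⟩ := hX v
    exact ⟨w, Quotient.sound hvw.symm, hwB⟩
  choose w hw x hxB hx using hclass
  refine hs.card_le_of_isClique_fiber x hxB fun b c hc d hd hcd => ⟨hcd, w c, w d, hw c, hw d,
    fun hwcd => hcd (by rw [← hw c, ← hw d, hwcd]), b, ?_⟩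
  rw [Set.mem_preimage, Set.mem_singleton_iff] at hc hd
  exact ⟨hc ▸ hx c, hd ▸ hx d⟩

theorem stmt14_general {n : ℕ} (J : Fin n → ℝ × ℝ)
    (hconn : (intervalGraph J).Connected) (k : ℕ) (hk : k < n)
    (B : Finset ℝ)
    (hdisj : (Finset.univ.filter fun v : Fin n =>
        ∀ x ∈ B, ¬ ((J v).1 ≤ x ∧ x ≤ (J v).2)).card ≤ k) :
    ∃ X : Finset (Sym2 (Fin n)), ↑X ⊆ (intervalGraph J).edgeSet ∧ X.card ≤ k ∧
      ∀ s : Finset (Quotient (edgeSub (intervalGraph J) ↑X).reachableSetoid),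
        IsIndepSet (contract (intervalGraph J) ↑X) ↑s → s.card ≤ B.card := by
  classical
  set T := Finset.univ.filter fun v : Fin n => ∃ x ∈ B, x ∈ Set.Icc (J v).1 (J v).2
  have hTc : Tᶜ.card ≤ k := by
    rw [Finset.compl_filter]
    simpa using hdisj
  have hT : T.Nonempty := by
    rw [Finset.nonempty_iff_ne_empty]
    rintro hT
    rw [hT, Finset.compl_empty, Finset.card_univ, Fintype.card_fin] at hTc
    omega
  obtain ⟨X, hXE, hXcard, hX⟩ := hconn.exists_edgeSub_reachable T hT
  refine ⟨X, hXE, hXcard.trans hTc, fun s hs => contract_intervalGraph_indepSet_card_le ?_ hs⟩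
  intro v
  obtain ⟨w, hwT, hvw⟩ := hX v
  exact ⟨w, (Finset.mem_filter.mp hwT).2, hvw⟩

/-- If `G` is a connected interval graph on `n` intervals and `B` is a set of
endpoints such that at most `k < n` intervals are disjoint from `B`, then there
is a set `X` of at most `k` edges with `α(G/X) ≤ |B|`. -/
theorem stmt14 {n : ℕ} (J : Fin n → ℝ × ℝ) (hJ : ∀ v, (J v).1 ≤ (J v).2)
    (hconn : (intervalGraph J).Connected) (k : ℕ) (hk : k < n)
    (B : Finset ℝ) (hB : ∀ x ∈ B, ∃ v : Fin n, x = (J v).2)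
    (hdisj : (Finset.univ.filter fun v : Fin n =>
        ∀ x ∈ B, ¬ ((J v).1 ≤ x ∧ x ≤ (J v).2)).card ≤ k) :
    ∃ X : Finset (Sym2 (Fin n)), ↑X ⊆ (intervalGraph J).edgeSet ∧ X.card ≤ k ∧
      ∀ s : Finset (Quotient (edgeSub (intervalGraph J) ↑X).reachableSetoid),
        IsIndepSet (contract (intervalGraph J) ↑X) ↑s → s.card ≤ B.card :=
  stmt14_general J hconn k hk B hdisj
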